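/- Let N be a lattice with dual N*, let w be a nonzero element of N, and let s₁,…,s_m ∈ N* \ ℚw form a eutactic star of scale s (that is, ∑ᵢ⟨v,sᵢ⟩² = s⟨v,v⟩ for all v). Then s·⟨w,w⟩ ≤ |{i : ⟨w,sᵢ⟩ ≠ 0}| · ⌈√(s⟨w,w⟩) − 1⌉². -/

import Mathlib

open scoped RealInnerProductSpace

/-!
An integer `⟪w, sᵢ⟫ ≠ 0` satisfies `⟪w, sᵢ⟫² < ⟪w, w⟫⟪sᵢ, sᵢ⟫ ≤ s⟪w, w⟫` by strict Cauchy–Schwarz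
(`sᵢ` is not a real multiple of `w`: such a multiple would be rational, as `⟪w, w⟫` and `⟪w, sᵢ⟫`
are integers) and because testing the eutactic identity on `sᵢ` gives `⟪sᵢ, sᵢ⟫ ≤ s`.
Integrality improves this to `⟪w, sᵢ⟫² ≤ ⌈√(s⟪w, w⟫) − 1⌉²`, and summing over the `i` with
`⟪w, sᵢ⟫ ≠ 0` the eutactic identity at `w` gives the bound.
-/

section InnerProductSpace

variable {F : Type*} [NormedAddCommGroup F] [InnerProductSpace ℝ F]

theorem real_inner_sq_lt_of_forall_ne_smul {x y : F} (hx : x ≠ 0) (hy : ∀ r : ℝ, y ≠ r • x) :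
    ⟪x, y⟫ ^ 2 < ⟪x, x⟫ * ⟪y, y⟫ := by
  refine lt_of_le_of_ne (sq ⟪x, y⟫ ▸ real_inner_mul_inner_self_le x y) fun h => ?_
  have habs : ‖⟪x, y⟫‖ = ‖x‖ * ‖y‖ := by
    rw [Real.norm_eq_abs, ← sq_eq_sq₀ (abs_nonneg _) (by positivity), sq_abs, h, mul_pow,
      real_inner_self_eq_norm_sq, real_inner_self_eq_norm_sq]
  obtain ⟨r, -, hr⟩ := (norm_inner_eq_norm_iff hx (by simpa using hy 0)).1 habs
  exact hy r hr

theorem eq_ratCast_smul_of_eq_smul {w x : F} {r : ℝ} {a b : ℚ} (hw : w ≠ 0)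
    (hww : ⟪w, w⟫ = a) (hwx : ⟪w, x⟫ = b) (hx : x = r • w) : x = ((b / a : ℚ) : ℝ) • w := by
  have ha : (a : ℝ) ≠ 0 := hww ▸ inner_self_ne_zero.2 hw
  have hr : r * a = b := by rw [← hww, ← hwx, hx, real_inner_smul_right]
  rw [hx, Rat.cast_div, ← hr, mul_div_cancel_right₀ _ ha]

end InnerProductSpace

section EutacticStar

variable {ι F : Type*} [Fintype ι] [NormedAddCommGroup F] [InnerProductSpace ℝ F]

def IsEutacticStar (v : ι → F) (s : ℝ) : Prop :=
  ∀ u : F, ∑ i, ⟪u, v i⟫ ^ 2 = s * ⟪u, u⟫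

variable {v : ι → F} {s : ℝ}

theorem IsEutacticStar.inner_self_le (h : IsEutacticStar v s) {i : ι} (hi : v i ≠ 0) :
    ⟪v i, v i⟫ ≤ s := by
  have hsingle : ⟪v i, v i⟫ ^ 2 ≤ s * ⟪v i, v i⟫ :=
    h (v i) ▸ Finset.single_le_sum (f := fun j => ⟪v i, v j⟫ ^ 2)
      (fun j _ => sq_nonneg _) (Finset.mem_univ i)
  rw [sq] at hsingle
  exact le_of_mul_le_mul_right hsingle (real_inner_self_pos.2 hi)

theorem IsEutacticStar.inner_sq_lt (h : IsEutacticStar v s) {w : F} {i : ι}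
    (hwv : ⟪w, v i⟫ ≠ 0) (hv : ∀ r : ℝ, v i ≠ r • w) : ⟪w, v i⟫ ^ 2 < s * ⟪w, w⟫ := by
  have hw : w ≠ 0 := by rintro rfl; exact hwv (inner_zero_left _)
  have hvi : v i ≠ 0 := by intro h0; exact hwv (h0 ▸ inner_zero_right _)
  calc ⟪w, v i⟫ ^ 2 < ⟪w, w⟫ * ⟪v i, v i⟫ := real_inner_sq_lt_of_forall_ne_smul hw hv
    _ ≤ ⟪w, w⟫ * s := mul_le_mul_of_nonneg_left (h.inner_self_le hvi) real_inner_self_nonneg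
    _ = s * ⟪w, w⟫ := mul_comm _ _

theorem IsEutacticStar.mul_inner_self_eq_sum_filter (h : IsEutacticStar v s) (w : F) :
    s * ⟪w, w⟫ = ∑ i ∈ Finset.univ.filter fun i => ⟪w, v i⟫ ≠ 0, ⟪w, v i⟫ ^ 2 := by
  rw [← h w, Finset.sum_filter_of_ne]
  intro i _ hi hzero
  exact hi (by rw [hzero, sq, zero_mul])

end EutacticStar

theorem Int.sq_le_ceil_sqrt_sub_one_sq {j : ℤ} {T : ℝ} (h : (j : ℝ) ^ 2 < T) :
    (j : ℝ) ^ 2 ≤ ((⌈√T - 1⌉ : ℤ) : ℝ) ^ 2 := by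
  have hlt : |(j : ℝ)| < √T := (Real.lt_sqrt (abs_nonneg _)).2 (by rwa [sq_abs])
  have hle : |j| ≤ ⌈√T - 1⌉ := Int.le_ceil_iff.2 (by push_cast; linarith)
  exact sq_le_sq.2 (le_abs.2 (Or.inl (by exact_mod_cast hle)))

theorem stmt_8 (n m s : ℕ)
    (w : EuclideanSpace ℝ (Fin n))
    (hww : ∃ k : ℤ, ⟪w, w⟫ = (k : ℝ))
    (v : Fin m → EuclideanSpace ℝ (Fin n))
    (hint : ∀ i, ∃ k : ℤ, ⟪w, v i⟫ = (k : ℝ))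
    (hnq : ∀ i, ∀ q : ℚ, v i ≠ (q : ℝ) • w)
    (heut : ∀ u : EuclideanSpace ℝ (Fin n), ∑ i, ⟪u, v i⟫ ^ 2 = s * ⟪u, u⟫) :
    (s : ℝ) * ⟪w, w⟫ ≤
      ((Finset.univ.filter fun i => ⟪w, v i⟫ ≠ 0).card : ℝ) *
        ((⌈Real.sqrt ((s : ℝ) * ⟪w, w⟫) - 1⌉ : ℤ) : ℝ) ^ 2 := by
  obtain ⟨k, hk⟩ := hww
  have heut : IsEutacticStar v s := heut
  have hbound : ∀ i ∈ Finset.univ.filter fun i => ⟪w, v i⟫ ≠ 0,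
      ⟪w, v i⟫ ^ 2 ≤ ((⌈Real.sqrt ((s : ℝ) * ⟪w, w⟫) - 1⌉ : ℤ) : ℝ) ^ 2 := by
    intro i hi
    have hwv : ⟪w, v i⟫ ≠ 0 := (Finset.mem_filter.1 hi).2
    have hw : w ≠ 0 := by rintro rfl; exact hwv (inner_zero_left _)
    obtain ⟨j, hj⟩ := hint i
    have hv : ∀ r : ℝ, v i ≠ r • w := fun r hr =>
      hnq i _ (eq_ratCast_smul_of_eq_smul hw (a := k) (b := j) (by rw [hk, Rat.cast_intCast])
        (by rw [hj, Rat.cast_intCast]) hr)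
    exact hj ▸ Int.sq_le_ceil_sqrt_sub_one_sq (hj ▸ heut.inner_sq_lt hwv hv)
  calc (s : ℝ) * ⟪w, w⟫ = ∑ i ∈ Finset.univ.filter fun i => ⟪w, v i⟫ ≠ 0, ⟪w, v i⟫ ^ 2 :=
        heut.mul_inner_self_eq_sum_filter w
    _ ≤ _ := (Finset.sum_le_card_nsmul _ _ _ hbound).trans_eq (nsmul_eq_mul _ _)
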